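/- arXiv:1411.4159 — 6 statements merged into one kernel-verified Lean document; each statement's English description precedes it below -/
import Mathlib

section
/- Let R be a ring with identity (not necessarily commutative). If A, B ∈ IPO(R), then the product AB again belongs to IPO(R); consequently IPO(R), equipped with this product (which is associative and has the zero ideal as an absorbing element), is a semigroup with zero. -/
/-!
For an additive subgroup `M`, `⊤ * M` is a left ideal and `M * ⊤` a right ideal. If `A = I * J`
with `J` a left ideal, then `⊤ * (J * B) = J * B`, so `A * B = (I * ⊤) * (J * B)` is a product of a
right and a left ideal; if `J` is a right ideal, then `A * ⊤ = A`, so `A * B = A * (⊤ * B)` is one.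
-/

open scoped Pointwise

/-- `I` is a left ideal of the ring `R`: an additive subgroup with `R·I ⊆ I`. -/
def IsLeftIdeal (R : Type*) [Ring R] (I : AddSubgroup R) : Prop :=
  ∀ r : R, ∀ x ∈ I, r * x ∈ I

/-- `I` is a right ideal of the ring `R`: an additive subgroup with `I·R ⊆ I`. -/
def IsRightIdeal (R : Type*) [Ring R] (I : AddSubgroup R) : Prop :=
  ∀ r : R, ∀ x ∈ I, x * r ∈ I

/-- `I` is a one-sided (left or right) ideal of `R`. -/
def IsOneSidedIdeal (R : Type*) [Ring R] (I : AddSubgroup R) : Prop :=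
  IsLeftIdeal R I ∨ IsRightIdeal R I

/-- `IPO(R)`: the set of all products `I*J` of two one-sided ideals of `R`.
Here `I * J` is the additive subgroup generated by `{a*b : a ∈ I, b ∈ J}`
(the pointwise product of additive subgroups). -/
def IPO (R : Type*) [Ring R] : Set (AddSubgroup R) :=
  {A | ∃ I J : AddSubgroup R, IsOneSidedIdeal R I ∧ IsOneSidedIdeal R J ∧ A = I * J}

/-- `A` is a vertex of `APOG(R) = Γ(IPO(R))`: a nonzero element of `IPO(R)` that is a
one-sided zero-divisor of the semigroup `IPO(R)`. -/
def APOGVertex (R : Type*) [Ring R] (A : AddSubgroup R) : Prop :=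
  A ∈ IPO R ∧ A ≠ ⊥ ∧ ∃ B ∈ IPO R, B ≠ ⊥ ∧ (A * B = ⊥ ∨ B * A = ⊥)

/-- The directed edge `A → B` of `APOG(R)`: both are vertices, `A ≠ B` and `A*B = 0`. -/
def APOGEdge (R : Type*) [Ring R] (A B : AddSubgroup R) : Prop :=
  APOGVertex R A ∧ APOGVertex R B ∧ A ≠ B ∧ A * B = ⊥

namespace AddSubgroup

section NonUnitalNonAssocRing

variable {R : Type*} [NonUnitalNonAssocRing R] {M N P : AddSubgroup R}

theorem mul_mem_mul {m n : R} (hm : m ∈ M) (hn : n ∈ N) : m * n ∈ M * N :=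
  AddSubmonoid.mul_mem_mul hm hn

theorem mul_le : M * N ≤ P ↔ ∀ m ∈ M, ∀ n ∈ N, m * n ∈ P :=
  AddSubmonoid.mul_le

theorem mul_le_mul_left (h : M ≤ N) : M * P ≤ N * P :=
  AddSubmonoid.mul_le_mul_left (M := M.toAddSubmonoid) (N := N.toAddSubmonoid) h

theorem mul_le_mul_right (h : N ≤ P) : M * N ≤ M * P :=
  AddSubmonoid.mul_le_mul_right (N := N.toAddSubmonoid) (P := P.toAddSubmonoid) h

theorem mul_bot (M : AddSubgroup R) : M * ⊥ = ⊥ :=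
  toAddSubmonoid_injective (AddSubmonoid.mul_bot M.toAddSubmonoid)

theorem bot_mul (M : AddSubgroup R) : ⊥ * M = ⊥ :=
  toAddSubmonoid_injective (AddSubmonoid.bot_mul M.toAddSubmonoid)

end NonUnitalNonAssocRing

protected theorem mul_assoc {R : Type*} [NonUnitalRing R] (M N P : AddSubgroup R) :
    M * N * P = M * (N * P) :=
  toAddSubmonoid_injective (mul_assoc M.toAddSubmonoid N.toAddSubmonoid P.toAddSubmonoid)

section Ring

variable {R : Type*} [Ring R]

theorem le_top_mul (M : AddSubgroup R) : M ≤ ⊤ * M := fun m hm => by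
  simpa using mul_mem_mul (mem_top 1) hm

theorem le_mul_top (M : AddSubgroup R) : M ≤ M * ⊤ := fun m hm => by
  simpa using mul_mem_mul hm (mem_top 1)

end Ring

end AddSubgroup

open AddSubgroup

section Ring

variable {R : Type*} [Ring R] {I : AddSubgroup R}

theorem isLeftIdeal_iff_top_mul_le : IsLeftIdeal R I ↔ ⊤ * I ≤ I :=
  ⟨fun h => mul_le.2 fun r _ x hx => h r x hx, fun h r _ hx => h (mul_mem_mul (mem_top r) hx)⟩

theorem isRightIdeal_iff_mul_top_le : IsRightIdeal R I ↔ I * ⊤ ≤ I :=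
  ⟨fun h => mul_le.2 fun x hx r _ => h r x hx, fun h r _ hx => h (mul_mem_mul hx (mem_top r))⟩

theorem IsLeftIdeal.top_mul_eq (hI : IsLeftIdeal R I) : ⊤ * I = I :=
  le_antisymm (isLeftIdeal_iff_top_mul_le.1 hI) (le_top_mul I)

theorem IsRightIdeal.mul_top_eq (hI : IsRightIdeal R I) : I * ⊤ = I :=
  le_antisymm (isRightIdeal_iff_mul_top_le.1 hI) (le_mul_top I)

theorem isLeftIdeal_top_mul (M : AddSubgroup R) : IsLeftIdeal R (⊤ * M) :=
  isLeftIdeal_iff_top_mul_le.2 <| by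
    rw [← AddSubgroup.mul_assoc]
    exact mul_le_mul_left le_top

theorem isRightIdeal_mul_top (M : AddSubgroup R) : IsRightIdeal R (M * ⊤) :=
  isRightIdeal_iff_mul_top_le.2 <| by
    rw [AddSubgroup.mul_assoc]
    exact mul_le_mul_right le_top

theorem isLeftIdeal_bot : IsLeftIdeal R ⊥ :=
  isLeftIdeal_iff_top_mul_le.2 (mul_bot ⊤).le

theorem mul_mem_IPO_of_top_mul_eq (M : AddSubgroup R) {N : AddSubgroup R} (hN : ⊤ * N = N) :
    M * N ∈ IPO R :=
  ⟨M * ⊤, N, .inr (isRightIdeal_mul_top M), .inl (hN ▸ isLeftIdeal_top_mul N), by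
    rw [AddSubgroup.mul_assoc, hN]⟩

theorem mul_mem_IPO_of_mul_top_eq {M : AddSubgroup R} (hM : M * ⊤ = M) (N : AddSubgroup R) :
    M * N ∈ IPO R :=
  ⟨M, ⊤ * N, .inr (hM ▸ isRightIdeal_mul_top M), .inl (isLeftIdeal_top_mul N), by
    rw [← AddSubgroup.mul_assoc, hM]⟩

theorem mul_mem_IPO {A : AddSubgroup R} (hA : A ∈ IPO R) (B : AddSubgroup R) : A * B ∈ IPO R := by
  obtain ⟨I, J, -, hJ | hJ, rfl⟩ := hA
  · rw [AddSubgroup.mul_assoc]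
    refine mul_mem_IPO_of_top_mul_eq I ?_
    rw [← AddSubgroup.mul_assoc, hJ.top_mul_eq]
  · refine mul_mem_IPO_of_mul_top_eq ?_ B
    rw [AddSubgroup.mul_assoc, hJ.mul_top_eq]

theorem bot_mem_IPO : (⊥ : AddSubgroup R) ∈ IPO R :=
  ⟨⊥, ⊥, .inl isLeftIdeal_bot, .inl isLeftIdeal_bot, (mul_bot ⊥).symm⟩

end Ring

/-- `IPO(R)` is closed under the product of additive subgroups;
together with the fact that the zero ideal belongs to `IPO(R)`, that the product is
associative and that the zero ideal is absorbing, `IPO(R)` is a semigroup with zero. -/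
theorem IPO_isSemigroupWithZero (R : Type*) [Ring R] :
    (∀ A ∈ IPO R, ∀ B ∈ IPO R, A * B ∈ IPO R) ∧
    (⊥ : AddSubgroup R) ∈ IPO R ∧
    (∀ A ∈ IPO R, ∀ B ∈ IPO R, ∀ C ∈ IPO R, A * B * C = A * (B * C)) ∧
    (∀ A ∈ IPO R, (⊥ : AddSubgroup R) * A = ⊥ ∧ A * (⊥ : AddSubgroup R) = ⊥) :=
  ⟨fun _ hA B _ => mul_mem_IPO hA B,
    bot_mem_IPO,
    fun A _ B _ C _ => AddSubgroup.mul_assoc A B C,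
    fun A _ => ⟨bot_mul A, mul_bot A⟩⟩
end

section
/- Let S be a semigroup with zero such that A^l(S) = A^r(S). Then for any two distinct elements a, b ∈ D(S)*, at least one of the following holds: (i) ab = 0; (ii) there exists c ∈ D(S)* with ac = 0 and cb = 0; (iii) there exist c, d ∈ D(S)* with ac = 0, cd = 0, and db = 0. In particular, the directed graph Γ(S) is connected and every pair of distinct vertices is joined by a directed path of length at most 3. -/
/-!
Under `A^l(S) = A^r(S)` every vertex annihilates some vertex on the right and is annihilated
by some vertex on the left. So for vertices `a, b` pick `c, d` with `a c = 0 = d b`: either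
`c d = 0`, giving `a → c → d → b`, or `c d` is itself a vertex with `a (c d) = 0 = (c d) b`.
Distinctness of consecutive vertices is automatic once the path is chosen as short as possible.
-/

/-- `D(S)* = D(S) \ {0}`: the set of nonzero one-sided zero-divisors of the semigroup `S`. -/
def Dstar (S : Type*) [SemigroupWithZero S] : Set S :=
  {a | a ≠ 0 ∧ ∃ b : S, b ≠ 0 ∧ (a * b = 0 ∨ b * a = 0)}

/-- `A^l(S) = {a ∈ D(S)* : b*a = 0 for some b ∈ D(S)*}`. -/
def Aleft (S : Type*) [SemigroupWithZero S] : Set S :=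
  {a | a ∈ Dstar S ∧ ∃ b ∈ Dstar S, b * a = 0}

/-- `A^r(S) = {a ∈ D(S)* : a*b = 0 for some b ∈ D(S)*}`. -/
def Aright (S : Type*) [SemigroupWithZero S] : Set S :=
  {a | a ∈ Dstar S ∧ ∃ b ∈ Dstar S, a * b = 0}

/-- The directed edge `a → b` of `Γ(S)`: both are vertices, `a ≠ b` and `a*b = 0`. -/
def ZDEdge (S : Type*) [SemigroupWithZero S] (a b : S) : Prop :=
  a ∈ Dstar S ∧ b ∈ Dstar S ∧ a ≠ b ∧ a * b = 0

section

variable {S : Type*} [SemigroupWithZero S] {a b c d : S}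

lemma left_mem_Dstar_of_mul_eq_zero (ha : a ≠ 0) (hb : b ≠ 0) (hab : a * b = 0) :
    a ∈ Dstar S :=
  ⟨ha, b, hb, Or.inl hab⟩

lemma right_mem_Dstar_of_mul_eq_zero (ha : a ≠ 0) (hb : b ≠ 0) (hab : a * b = 0) :
    b ∈ Dstar S :=
  ⟨hb, a, ha, Or.inr hab⟩

lemma Dstar_subset_Aleft_union_Aright : Dstar S ⊆ Aleft S ∪ Aright S := by
  rintro a ha
  obtain ⟨b, hb, hab | hba⟩ := ha.2
  · exact Or.inr ⟨ha, b, right_mem_Dstar_of_mul_eq_zero ha.1 hb hab, hab⟩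
  · exact Or.inl ⟨ha, b, left_mem_Dstar_of_mul_eq_zero hb ha.1 hba, hba⟩

lemma Dstar_eq_Aright_of_Aleft_eq_Aright (h : Aleft S = Aright S) : Dstar S = Aright S := by
  refine subset_antisymm (fun a ha => ?_) (fun a ha => ha.1)
  rcases Dstar_subset_Aleft_union_Aright ha with hl | hr
  exacts [h ▸ hl, hr]

lemma zero_path_of_mem_Aright_of_mem_Aleft (ha : a ∈ Aright S) (hb : b ∈ Aleft S) :
    a * b = 0 ∨
      (∃ c ∈ Dstar S, a * c = 0 ∧ c * b = 0) ∨
      (∃ c ∈ Dstar S, ∃ d ∈ Dstar S, a * c = 0 ∧ c * d = 0 ∧ d * b = 0) := by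
  obtain ⟨haD, c, hc, hac⟩ := ha
  obtain ⟨-, d, hd, hdb⟩ := hb
  by_cases hcd : c * d = 0
  · exact Or.inr (Or.inr ⟨c, hc, d, hd, hac, hcd, hdb⟩)
  · have hacd : a * (c * d) = 0 := by rw [← mul_assoc, hac, zero_mul]
    have hcdb : c * d * b = 0 := by rw [mul_assoc, hdb, mul_zero]
    exact Or.inr (Or.inl
      ⟨c * d, right_mem_Dstar_of_mul_eq_zero haD.1 hcd hacd, hacd, hcdb⟩)

lemma zdEdge_two_path (ha : a ∈ Dstar S) (hc : c ∈ Dstar S) (hb : b ∈ Dstar S)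
    (hab : a * b ≠ 0) (hac : a * c = 0) (hcb : c * b = 0) :
    ZDEdge S a c ∧ ZDEdge S c b := by
  refine ⟨⟨ha, hc, ?_, hac⟩, ⟨hc, hb, ?_, hcb⟩⟩
  · rintro rfl; exact hab hcb
  · rintro rfl; exact hab hac

lemma zdEdge_three_path (ha : a ∈ Dstar S) (hc : c ∈ Dstar S) (hd : d ∈ Dstar S)
    (hb : b ∈ Dstar S) (had : a * d ≠ 0) (hcb : c * b ≠ 0)
    (hac : a * c = 0) (hcd : c * d = 0) (hdb : d * b = 0) :
    ZDEdge S a c ∧ ZDEdge S c d ∧ ZDEdge S d b := by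
  refine ⟨⟨ha, hc, ?_, hac⟩, ⟨hc, hd, ?_, hcd⟩, ⟨hd, hb, ?_, hdb⟩⟩
  · rintro rfl; exact had hcd
  · rintro rfl; exact hcb hdb
  · rintro rfl; exact hcb hcd

lemma zdEdge_path_of_zero_path (ha : a ∈ Dstar S) (hb : b ∈ Dstar S) (hab : a ≠ b)
    (hpath : a * b = 0 ∨
      (∃ c ∈ Dstar S, a * c = 0 ∧ c * b = 0) ∨
      (∃ c ∈ Dstar S, ∃ d ∈ Dstar S, a * c = 0 ∧ c * d = 0 ∧ d * b = 0)) :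
    ZDEdge S a b ∨ (∃ c, ZDEdge S a c ∧ ZDEdge S c b) ∨
      ∃ c d, ZDEdge S a c ∧ ZDEdge S c d ∧ ZDEdge S d b := by
  by_cases hab0 : a * b = 0
  · exact Or.inl ⟨ha, hb, hab, hab0⟩
  rcases hpath with hab0' | ⟨c, hc, hac, hcb⟩ | ⟨c, hc, d, hd, hac, hcd, hdb⟩
  · exact absurd hab0' hab0
  · exact Or.inr (Or.inl ⟨c, zdEdge_two_path ha hc hb hab0 hac hcb⟩)
  by_cases hcb : c * b = 0
  · exact Or.inr (Or.inl ⟨c, zdEdge_two_path ha hc hb hab0 hac hcb⟩)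
  by_cases had : a * d = 0
  · exact Or.inr (Or.inl ⟨d, zdEdge_two_path ha hd hb hab0 had hdb⟩)
  exact Or.inr (Or.inr ⟨c, d, zdEdge_three_path ha hc hd hb had hcb hac hcd hdb⟩)

lemma transGen_zdEdge_of_path
    (hpath : ZDEdge S a b ∨ (∃ c, ZDEdge S a c ∧ ZDEdge S c b) ∨
      ∃ c d, ZDEdge S a c ∧ ZDEdge S c d ∧ ZDEdge S d b) :
    Relation.TransGen (ZDEdge S) a b := by
  rcases hpath with e | ⟨c, e₁, e₂⟩ | ⟨c, d, e₁, e₂, e₃⟩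
  · exact .single e
  · exact .tail (.single e₁) e₂
  · exact .tail (.tail (.single e₁) e₂) e₃

end

/-- If `A^l(S) = A^r(S)`, then any two distinct vertices `a, b ∈ D(S)*`
are joined as in (i), (ii) or (iii); in particular `Γ(S)` is connected and every pair of
distinct vertices is joined by a directed path of length at most `3`. -/
theorem Gamma_connected_of_Aleft_eq_Aright (S : Type*) [SemigroupWithZero S]
    (h : Aleft S = Aright S) :
    (∀ a ∈ Dstar S, ∀ b ∈ Dstar S, a ≠ b →
      a * b = 0 ∨
      (∃ c ∈ Dstar S, a * c = 0 ∧ c * b = 0) ∨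
      (∃ c ∈ Dstar S, ∃ d ∈ Dstar S, a * c = 0 ∧ c * d = 0 ∧ d * b = 0)) ∧
    (∀ a ∈ Dstar S, ∀ b ∈ Dstar S, a ≠ b →
      (Relation.TransGen (ZDEdge S) a b ∧
        (ZDEdge S a b ∨ (∃ c, ZDEdge S a c ∧ ZDEdge S c b) ∨
          ∃ c d, ZDEdge S a c ∧ ZDEdge S c d ∧ ZDEdge S d b))) := by
  have hDr : Dstar S = Aright S := Dstar_eq_Aright_of_Aleft_eq_Aright h
  have hDl : Dstar S = Aleft S := hDr.trans h.symm
  have hzero : ∀ a ∈ Dstar S, ∀ b ∈ Dstar S, a * b = 0 ∨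
      (∃ c ∈ Dstar S, a * c = 0 ∧ c * b = 0) ∨
      (∃ c ∈ Dstar S, ∃ d ∈ Dstar S, a * c = 0 ∧ c * d = 0 ∧ d * b = 0) :=
    fun a ha b hb => zero_path_of_mem_Aright_of_mem_Aleft (hDr ▸ ha) (hDl ▸ hb)
  refine ⟨fun a ha b hb _ => hzero a ha b hb, fun a ha b hb hab => ?_⟩
  have hpath := zdEdge_path_of_zero_path ha hb hab (hzero a ha b hb)
  exact ⟨transGen_zdEdge_of_path hpath, hpath⟩
end

section
/- Let S be a semigroup with zero. If the directed graph Γ(S) is connected (for any two distinct vertices a, b ∈ D(S)* there is a directed path from a to b all of whose vertices lie in D(S)*), then A^l(S) = A^r(S). -/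
/-! The tail of a directed path in `Γ(S)` lies in `A^r(S)` (its first edge leaves it) and the
head in `A^l(S)` (its last edge enters it). So if `ba = 0` with `a ≠ b`, a path from `a` to `b`
puts `a` in `A^r(S)`, and symmetrically; the case `a = b` is `a² = 0`. -/

namespace ZDEdge

variable {S : Type*} [SemigroupWithZero S] {a b : S}

theorem left_mem_Aright (h : ZDEdge S a b) : a ∈ Aright S :=
  ⟨h.1, b, h.2.1, h.2.2.2⟩

theorem right_mem_Aleft (h : ZDEdge S a b) : b ∈ Aleft S :=
  ⟨h.2.1, a, h.1, h.2.2.2⟩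

end ZDEdge

section

variable {S : Type*} [SemigroupWithZero S] {a b : S}

theorem mem_Aright_of_transGen (h : Relation.TransGen (ZDEdge S) a b) : a ∈ Aright S := by
  obtain ⟨c, hac, -⟩ := Relation.TransGen.head'_iff.mp h
  exact hac.left_mem_Aright

theorem mem_Aleft_of_transGen (h : Relation.TransGen (ZDEdge S) a b) : b ∈ Aleft S := by
  obtain ⟨c, -, hcb⟩ := Relation.TransGen.tail'_iff.mp h
  exact hcb.right_mem_Aleft

end

/-- If the directed zero-divisor graph `Γ(S)` is connected (any two
distinct vertices are joined by a directed path through vertices), then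
`A^l(S) = A^r(S)`. -/
theorem Aleft_eq_Aright_of_Gamma_connected (S : Type*) [SemigroupWithZero S]
    (h : ∀ a ∈ Dstar S, ∀ b ∈ Dstar S, a ≠ b → Relation.TransGen (ZDEdge S) a b) :
    Aleft S = Aright S := by
  ext a
  constructor
  · rintro ⟨ha, b, hb, hba⟩
    rcases eq_or_ne a b with rfl | hab
    · exact ⟨ha, a, ha, hba⟩
    · exact mem_Aright_of_transGen (h a ha b hb hab)
  · rintro ⟨ha, b, hb, hab⟩
    rcases eq_or_ne b a with rfl | hba
    · exact ⟨ha, b, ha, hab⟩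
    · exact mem_Aleft_of_transGen (h b hb a ha hba)
end

section
/- Let R be a ring with identity and let I = Rx (or I = xR) be a principal left (or right) ideal of R, for some nonzero x ∈ R, such that I is a vertex of APOG(R). If every element of ad(I) that is a left or a right ideal of R is a finite set, then R is a finite ring. -/
open scoped Pointwise

/-- `A ⇌ B`: `A ≠ B` and `A*B = 0` or `B*A = 0`. -/
def APOGAdj (R : Type*) [Ring R] (A B : AddSubgroup R) : Prop :=
  A ≠ B ∧ (A * B = ⊥ ∨ B * A = ⊥)

/-- `ad(C)`: the vertices `A` with `A = C`, or `C ⇌ A`, or `C ⇌ B ⇌ A` for some vertex `B`. -/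
def ad (R : Type*) [Ring R] (C : AddSubgroup R) : Set (AddSubgroup R) :=
  {A | APOGVertex R A ∧ (A = C ∨ APOGAdj R C A ∨
    ∃ B, APOGVertex R B ∧ APOGAdj R C B ∧ APOGAdj R B A)}

/-- The principal left ideal `Rx`. -/
def leftPrincipal {R : Type*} [Ring R] (x : R) : AddSubgroup R where
  carrier := Set.range fun r => r * x
  zero_mem' := ⟨0, zero_mul x⟩
  add_mem' := by rintro a b ⟨r, rfl⟩ ⟨s, rfl⟩; exact ⟨r + s, by simp [add_mul]⟩
  neg_mem' := by rintro a ⟨r, rfl⟩; exact ⟨-r, by simp⟩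

/-- The principal right ideal `xR`. -/
def rightPrincipal {R : Type*} [Ring R] (x : R) : AddSubgroup R where
  carrier := Set.range fun r => x * r
  zero_mem' := ⟨0, mul_zero x⟩
  add_mem' := by rintro a b ⟨r, rfl⟩ ⟨s, rfl⟩; exact ⟨r + s, by simp [mul_add]⟩
  neg_mem' := by rintro a ⟨r, rfl⟩; exact ⟨-r, by simp⟩

/-!
Say `I * B = 0` with `B ≠ 0` (the case `B * I = 0` is symmetric). The right annihilator `A`
of `I` is a nonzero right ideal adjacent to `I`, so it lies in `ad(I)` and is finite. The right
annihilator `C` of `A` is a left ideal adjacent to `A`, hence zero or in `ad(I)`; either way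
it is finite. Since `s ↦ (a ↦ a * s)` maps `R` additively into the finite set of maps
`A → A` with kernel `C`, the ring `R` is finite.
-/

namespace APOG

variable {R : Type*} [Ring R]

theorem mul_mem_mul {M N : AddSubgroup R} {m n : R} (hm : m ∈ M) (hn : n ∈ N) :
    m * n ∈ M * N :=
  AddSubmonoid.mul_mem_mul hm hn

theorem mul_le_iff {M N P : AddSubgroup R} : M * N ≤ P ↔ ∀ m ∈ M, ∀ n ∈ N, m * n ∈ P := by
  rw [← AddSubgroup.toAddSubmonoid_le, AddSubgroup.mul_toAddSubmonoid, AddSubmonoid.mul_le]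
  rfl

theorem mul_eq_bot_iff {M N : AddSubgroup R} : M * N = ⊥ ↔ ∀ m ∈ M, ∀ n ∈ N, m * n = 0 := by
  simp only [eq_bot_iff, mul_le_iff, AddSubgroup.mem_bot]

theorem mem_IPO_of_isLeftIdeal {A : AddSubgroup R} (hA : IsLeftIdeal R A) : A ∈ IPO R := by
  refine ⟨⊤, A, Or.inl fun _ _ _ ↦ AddSubgroup.mem_top _, Or.inl hA, le_antisymm ?_ ?_⟩
  · intro a ha
    simpa using mul_mem_mul (AddSubgroup.mem_top (1 : R)) ha
  · exact mul_le_iff.mpr fun r _ a ha ↦ hA r a ha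

theorem mem_IPO_of_isRightIdeal {A : AddSubgroup R} (hA : IsRightIdeal R A) : A ∈ IPO R := by
  refine ⟨A, ⊤, Or.inr hA, Or.inl fun _ _ _ ↦ AddSubgroup.mem_top _, le_antisymm ?_ ?_⟩
  · intro a ha
    simpa using mul_mem_mul ha (AddSubgroup.mem_top (1 : R))
  · exact mul_le_iff.mpr fun a ha r _ ↦ hA r a ha

theorem mem_ad_of_adj {A C : AddSubgroup R} (hA : APOGVertex R A)
    (hCA : C * A = ⊥ ∨ A * C = ⊥) : A ∈ ad R C := by
  refine ⟨hA, ?_⟩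
  by_cases h : A = C
  · exact Or.inl h
  · exact Or.inr (Or.inl ⟨Ne.symm h, hCA⟩)

theorem mem_ad_of_adj_adj {A B C : AddSubgroup R} (hB : APOGVertex R B) (hA : APOGVertex R A)
    (hCB : C * B = ⊥ ∨ B * C = ⊥) (hBA : B * A = ⊥ ∨ A * B = ⊥) : A ∈ ad R C := by
  by_cases hBC : B = C
  · exact mem_ad_of_adj hA (hBC ▸ hBA)
  by_cases hAB : A = B
  · exact mem_ad_of_adj hA (hAB ▸ hCB)
  by_cases hAC : A = C
  · exact ⟨hA, Or.inl hAC⟩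
  exact ⟨hA, Or.inr (Or.inr ⟨B, hB, ⟨Ne.symm hBC, hCB⟩, ⟨Ne.symm hAB, hBA⟩⟩)⟩

def rightAnnihilator (I : AddSubgroup R) : AddSubgroup R where
  carrier := {a | ∀ i ∈ I, i * a = 0}
  zero_mem' i _ := mul_zero i
  add_mem' {a b} ha hb i hi := by rw [mul_add, ha i hi, hb i hi, add_zero]
  neg_mem' {a} ha i hi := by rw [mul_neg, ha i hi, neg_zero]

def leftAnnihilator (I : AddSubgroup R) : AddSubgroup R where
  carrier := {a | ∀ i ∈ I, a * i = 0}
  zero_mem' i _ := zero_mul i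
  add_mem' {a b} ha hb i hi := by rw [add_mul, ha i hi, hb i hi, add_zero]
  neg_mem' {a} ha i hi := by rw [neg_mul, ha i hi, neg_zero]

theorem le_rightAnnihilator_iff {I B : AddSubgroup R} : B ≤ rightAnnihilator I ↔ I * B = ⊥ := by
  rw [mul_eq_bot_iff]
  exact ⟨fun h i hi b hb ↦ h hb i hi, fun h b hb i hi ↦ h i hi b hb⟩

theorem le_leftAnnihilator_iff {I B : AddSubgroup R} : B ≤ leftAnnihilator I ↔ B * I = ⊥ := by
  rw [mul_eq_bot_iff]
  rfl

theorem mul_rightAnnihilator (I : AddSubgroup R) : I * rightAnnihilator I = ⊥ :=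
  le_rightAnnihilator_iff.mp le_rfl

theorem leftAnnihilator_mul (I : AddSubgroup R) : leftAnnihilator I * I = ⊥ :=
  le_leftAnnihilator_iff.mp le_rfl

theorem isRightIdeal_rightAnnihilator (I : AddSubgroup R) :
    IsRightIdeal R (rightAnnihilator I) := fun r a ha i hi ↦ by
  rw [← mul_assoc, ha i hi, zero_mul]

theorem isLeftIdeal_leftAnnihilator (I : AddSubgroup R) :
    IsLeftIdeal R (leftAnnihilator I) := fun r a ha i hi ↦ by
  rw [mul_assoc, ha i hi, mul_zero]

theorem isLeftIdeal_rightAnnihilator {A : AddSubgroup R} (hA : IsRightIdeal R A) :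
    IsLeftIdeal R (rightAnnihilator A) := fun r c hc a ha ↦ by
  rw [← mul_assoc]
  exact hc (a * r) (hA r a ha)

theorem isRightIdeal_leftAnnihilator {A : AddSubgroup R} (hA : IsLeftIdeal R A) :
    IsRightIdeal R (leftAnnihilator A) := fun r c hc a ha ↦ by
  rw [mul_assoc]
  exact hc (r * a) (hA r a ha)

def mulRightHom {A : AddSubgroup R} (hA : IsRightIdeal R A) : R →+ (A → A) where
  toFun s a := ⟨a * s, hA s a a.2⟩
  map_zero' := funext fun a ↦ Subtype.ext (mul_zero (a : R))
  map_add' s t := funext fun a ↦ Subtype.ext (mul_add (a : R) s t)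

def mulLeftHom {A : AddSubgroup R} (hA : IsLeftIdeal R A) : R →+ (A → A) where
  toFun s a := ⟨s * a, hA s a a.2⟩
  map_zero' := funext fun a ↦ Subtype.ext (zero_mul (a : R))
  map_add' s t := funext fun a ↦ Subtype.ext (add_mul s t (a : R))

theorem ker_mulRightHom {A : AddSubgroup R} (hA : IsRightIdeal R A) :
    (mulRightHom hA).ker = rightAnnihilator A := by
  ext c
  simp only [AddMonoidHom.mem_ker, funext_iff, Subtype.ext_iff]
  exact ⟨fun h a ha ↦ h ⟨a, ha⟩, fun h a ↦ h a a.2⟩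

theorem ker_mulLeftHom {A : AddSubgroup R} (hA : IsLeftIdeal R A) :
    (mulLeftHom hA).ker = leftAnnihilator A := by
  ext c
  simp only [AddMonoidHom.mem_ker, funext_iff, Subtype.ext_iff]
  exact ⟨fun h a ha ↦ h ⟨a, ha⟩, fun h a ↦ h a a.2⟩

theorem finite_of_finite_rightAnnihilator {A : AddSubgroup R}
    (hA : IsRightIdeal R A) [Finite A] [Finite (rightAnnihilator A)] : Finite R := by
  rw [AddMonoidHom.finite_iff_finite_ker_range (mulRightHom hA), ker_mulRightHom hA]
  exact ⟨inferInstance, inferInstance⟩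

theorem finite_of_finite_leftAnnihilator {A : AddSubgroup R}
    (hA : IsLeftIdeal R A) [Finite A] [Finite (leftAnnihilator A)] : Finite R := by
  rw [AddMonoidHom.finite_iff_finite_ker_range (mulLeftHom hA), ker_mulLeftHom hA]
  exact ⟨inferInstance, inferInstance⟩


theorem finite_of_mul_eq_bot_right {I B : AddSubgroup R} (hI : APOGVertex R I)
    (hfin : ∀ A ∈ ad R I, IsOneSidedIdeal R A → (A : Set R).Finite)
    (hB : B ≠ ⊥) (hIB : I * B = ⊥) : Finite R := by
  set A := rightAnnihilator I
  have hAr : IsRightIdeal R A := isRightIdeal_rightAnnihilator I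
  have hAv : APOGVertex R A := ⟨mem_IPO_of_isRightIdeal hAr,
    ne_bot_of_le_ne_bot hB (le_rightAnnihilator_iff.mpr hIB), I, hI.1, hI.2.1,
    Or.inr (mul_rightAnnihilator I)⟩
  have : Finite A := (hfin A (mem_ad_of_adj hAv (Or.inl (mul_rightAnnihilator I)))
    (Or.inr hAr)).to_subtype
  set C := rightAnnihilator A
  have hCl : IsLeftIdeal R C := isLeftIdeal_rightAnnihilator hAr
  have : Finite C := by
    rcases eq_or_ne C ⊥ with hC | hC
    · rw [hC]
      infer_instance
    have hCv : APOGVertex R C := ⟨mem_IPO_of_isLeftIdeal hCl, hC, A,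
      mem_IPO_of_isRightIdeal hAr, hAv.2.1, Or.inr (mul_rightAnnihilator A)⟩
    exact (hfin C (mem_ad_of_adj_adj hAv hCv (Or.inl (mul_rightAnnihilator I))
      (Or.inl (mul_rightAnnihilator A))) (Or.inl hCl)).to_subtype
  exact finite_of_finite_rightAnnihilator hAr

theorem finite_of_mul_eq_bot_left {I B : AddSubgroup R} (hI : APOGVertex R I)
    (hfin : ∀ A ∈ ad R I, IsOneSidedIdeal R A → (A : Set R).Finite)
    (hB : B ≠ ⊥) (hBI : B * I = ⊥) : Finite R := by
  set A := leftAnnihilator I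
  have hAl : IsLeftIdeal R A := isLeftIdeal_leftAnnihilator I
  have hAv : APOGVertex R A := ⟨mem_IPO_of_isLeftIdeal hAl,
    ne_bot_of_le_ne_bot hB (le_leftAnnihilator_iff.mpr hBI), I, hI.1, hI.2.1,
    Or.inl (leftAnnihilator_mul I)⟩
  have : Finite A := (hfin A (mem_ad_of_adj hAv (Or.inr (leftAnnihilator_mul I)))
    (Or.inl hAl)).to_subtype
  set C := leftAnnihilator A
  have hCr : IsRightIdeal R C := isRightIdeal_leftAnnihilator hAl
  have : Finite C := by
    rcases eq_or_ne C ⊥ with hC | hC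
    · rw [hC]
      infer_instance
    have hCv : APOGVertex R C := ⟨mem_IPO_of_isRightIdeal hCr, hC, A,
      mem_IPO_of_isLeftIdeal hAl, hAv.2.1, Or.inl (leftAnnihilator_mul A)⟩
    exact (hfin C (mem_ad_of_adj_adj hAv hCv (Or.inr (leftAnnihilator_mul I))
      (Or.inr (leftAnnihilator_mul A))) (Or.inr hCr)).to_subtype
  exact finite_of_finite_leftAnnihilator hAl

end APOG

theorem finite_of_ad_finite_general (R : Type*) [Ring R]
    (I : AddSubgroup R)
    (hIv : APOGVertex R I)
    (hfin : ∀ A ∈ ad R I, IsOneSidedIdeal R A → (A : Set R).Finite) :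
    Finite R := by
  obtain ⟨B, -, hB, hIB | hBI⟩ := hIv.2.2
  · exact APOG.finite_of_mul_eq_bot_right hIv hfin hB hIB
  · exact APOG.finite_of_mul_eq_bot_left hIv hfin hB hBI

/-- If `I = Rx` (or `I = xR`) is a principal one-sided ideal which is a
vertex of `APOG(R)` and every left or right ideal belonging to `ad(I)` is finite, then
the ring `R` is finite. -/
theorem finite_of_ad_finite (R : Type*) [Ring R] (x : R) (hx : x ≠ 0)
    (I : AddSubgroup R) (hI : I = leftPrincipal x ∨ I = rightPrincipal x)
    (hIv : APOGVertex R I)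
    (hfin : ∀ A ∈ ad R I, IsOneSidedIdeal R A → (A : Set R).Finite) :
    Finite R :=
  finite_of_ad_finite_general R I hIv hfin
end

section
/- Let S be a semigroup with zero. Then for any two distinct a, b ∈ D(S)*, at least one of the following holds: (i) a and b are adjacent in the undirected zero-divisor graph Γ̄(S); (ii) there exists c ∈ D(S)* adjacent to both a and b; (iii) there exist c, d ∈ D(S)* such that a is adjacent to c, c is adjacent to d, and d is adjacent to b. In particular, Γ̄(S) is a connected graph and diam(Γ̄(S)) ≤ 3. -/
/-- `a` and `b` are distinct elements of `D(S)*` that are adjacent in `Γ̄(S)`. -/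
def UEdge (S : Type*) [SemigroupWithZero S] (a b : S) : Prop :=
  a ∈ Dstar S ∧ b ∈ Dstar S ∧ a ≠ b ∧ (a * b = 0 ∨ b * a = 0)

/-- The undirected zero-divisor graph `Γ̄(S)` on vertex set `D(S)*`: distinct `a, b`
are adjacent iff `a*b = 0` or `b*a = 0`. -/
def zdGraph (S : Type*) [SemigroupWithZero S] : SimpleGraph (Dstar S) where
  Adj a b := a ≠ b ∧ ((a : S) * b = 0 ∨ (b : S) * a = 0)
  symm := ⟨by rintro a b ⟨hab, h⟩; exact ⟨hab.symm, h.symm⟩⟩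
  loopless := ⟨by rintro a ⟨h, -⟩; exact h rfl⟩

/-! Let `x ≠ 0` annihilate `a` and `y ≠ 0` annihilate `b`, each on some side. According to the
sides, one of the products `x * b`, `x * y`, `y * x`, `b * x` is annihilated by `a` and by `y` or
`b`, giving a path `a - z - y - b` or `a - z - b`; if that product is `0`, then `x` is adjacent to
`y` or to `b` instead. Vertices of these paths may coincide, which only shortens them, so distances
are estimated through `edist`, where `edist v v = 0 ≤ 1`. -/

namespace SimpleGraph

variable {V : Type*} {G : SimpleGraph V}

theorem edist_le_three_of_edist_le_one {u w w' v : V} (h₁ : G.edist u w ≤ 1)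
    (h₂ : G.edist w w' ≤ 1) (h₃ : G.edist w' v ≤ 1) : G.edist u v ≤ 3 :=
  calc G.edist u v ≤ G.edist u w' + G.edist w' v := G.edist_triangle
    _ ≤ G.edist u w + G.edist w w' + G.edist w' v := by gcongr; exact G.edist_triangle
    _ ≤ 1 + 1 + 1 := by gcongr
    _ = 3 := by norm_num

theorem adj_or_exists_adj_of_edist_le_three {u v : V} (huv : u ≠ v) (h : G.edist u v ≤ 3) :
    G.Adj u v ∨ (∃ w, G.Adj u w ∧ G.Adj w v) ∨
      ∃ w w', G.Adj u w ∧ G.Adj w w' ∧ G.Adj w' v := by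
  obtain ⟨p, hp⟩ := exists_walk_of_edist_ne_top (h.trans_lt (by decide)).ne
  have hp3 : p.length ≤ 3 := by exact_mod_cast hp ▸ h
  match p, hp3 with
  | .nil, _ => exact absurd rfl huv
  | .cons h₁ .nil, _ => exact .inl h₁
  | .cons h₁ (.cons h₂ .nil), _ => exact .inr (.inl ⟨_, h₁, h₂⟩)
  | .cons h₁ (.cons h₂ (.cons h₃ .nil)), _ => exact .inr (.inr ⟨_, _, h₁, h₂, h₃⟩)
  | .cons _ (.cons _ (.cons _ (.cons _ _))), hp3 => simp only [Walk.length_cons] at hp3; omega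

end SimpleGraph

open SimpleGraph

section ZeroDivisorGraph

variable {S : Type*} [SemigroupWithZero S]

theorem zdGraph_adj_iff_uedge {u v : Dstar S} : (zdGraph S).Adj u v ↔ UEdge S u v :=
  ⟨fun ⟨hne, h⟩ => ⟨u.2, v.2, Subtype.coe_injective.ne hne, h⟩,
    fun ⟨_, _, hne, h⟩ => ⟨Subtype.coe_injective.ne_iff.mp hne, h⟩⟩

theorem zdGraph_edist_le_one {u v : Dstar S} (h : (u : S) * v = 0 ∨ (v : S) * u = 0) :
    (zdGraph S).edist u v ≤ 1 := by
  rw [edist_le_one_iff_adj_or_eq]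
  by_cases huv : u = v
  exacts [.inr huv, .inl ⟨huv, h⟩]

theorem zdGraph_edist_le_three_of_mul_eq_zero_right {u v : Dstar S} {x : S} (hx : x ≠ 0)
    (hux : (u : S) * x = 0) : (zdGraph S).edist u v ≤ 3 := by
  let X : Dstar S := ⟨x, hx, u, u.2.1, .inr hux⟩
  obtain ⟨-, y, hy, hvy | hyv⟩ := v.2
  · let Y : Dstar S := ⟨y, hy, v, v.2.1, .inr hvy⟩
    by_cases hz : x * v = 0
    · exact edist_le_three_of_edist_le_one (w := X) (zdGraph_edist_le_one (.inl hux))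
        (zdGraph_edist_le_one (.inl hz)) (by simp)
    · let Z : Dstar S := ⟨x * v, hz, u, u.2.1, .inr (by rw [← mul_assoc, hux, zero_mul])⟩
      exact edist_le_three_of_edist_le_one (w := Z) (w' := Y)
        (zdGraph_edist_le_one (.inl (by simp [Z, ← mul_assoc, hux])))
        (zdGraph_edist_le_one (.inl (by simp [Z, Y, mul_assoc, hvy])))
        (zdGraph_edist_le_one (.inr hvy))
  · let Y : Dstar S := ⟨y, hy, v, v.2.1, .inl hyv⟩
    by_cases hz : x * y = 0
    · exact edist_le_three_of_edist_le_one (w := X) (w' := Y) (zdGraph_edist_le_one (.inl hux))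
        (zdGraph_edist_le_one (.inl hz)) (zdGraph_edist_le_one (.inl hyv))
    · let Z : Dstar S := ⟨x * y, hz, u, u.2.1, .inr (by rw [← mul_assoc, hux, zero_mul])⟩
      exact edist_le_three_of_edist_le_one (w := Z) (w' := v)
        (zdGraph_edist_le_one (.inl (by simp [Z, ← mul_assoc, hux])))
        (zdGraph_edist_le_one (.inl (by simp [Z, mul_assoc, hyv])))
        (by simp)

theorem zdGraph_edist_le_three_of_mul_eq_zero_left {u v : Dstar S} {x : S} (hx : x ≠ 0)
    (hxu : x * u = 0) : (zdGraph S).edist u v ≤ 3 := by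
  let X : Dstar S := ⟨x, hx, u, u.2.1, .inl hxu⟩
  obtain ⟨-, y, hy, hvy | hyv⟩ := v.2
  · let Y : Dstar S := ⟨y, hy, v, v.2.1, .inr hvy⟩
    by_cases hz : y * x = 0
    · exact edist_le_three_of_edist_le_one (w := X) (w' := Y) (zdGraph_edist_le_one (.inr hxu))
        (zdGraph_edist_le_one (.inr hz)) (zdGraph_edist_le_one (.inr hvy))
    · let Z : Dstar S := ⟨y * x, hz, u, u.2.1, .inl (by rw [mul_assoc, hxu, mul_zero])⟩
      exact edist_le_three_of_edist_le_one (w := Z) (w' := v)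
        (zdGraph_edist_le_one (.inr (by simp [Z, mul_assoc, hxu])))
        (zdGraph_edist_le_one (.inr (by simp [Z, ← mul_assoc, hvy])))
        (by simp)
  · let Y : Dstar S := ⟨y, hy, v, v.2.1, .inl hyv⟩
    by_cases hz : v * x = 0
    · exact edist_le_three_of_edist_le_one (w := X) (zdGraph_edist_le_one (.inr hxu))
        (zdGraph_edist_le_one (.inr hz)) (by simp)
    · let Z : Dstar S := ⟨v * x, hz, u, u.2.1, .inl (by rw [mul_assoc, hxu, mul_zero])⟩
      exact edist_le_three_of_edist_le_one (w := Z) (w' := Y)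
        (zdGraph_edist_le_one (.inr (by simp [Z, mul_assoc, hxu])))
        (zdGraph_edist_le_one (.inr (by simp [Z, Y, ← mul_assoc, hyv])))
        (zdGraph_edist_le_one (.inl hyv))

theorem zdGraph_edist_le_three (u v : Dstar S) : (zdGraph S).edist u v ≤ 3 := by
  obtain ⟨-, x, hx, hux | hxu⟩ := u.2
  exacts [zdGraph_edist_le_three_of_mul_eq_zero_right hx hux,
    zdGraph_edist_le_three_of_mul_eq_zero_left hx hxu]

end ZeroDivisorGraph

/-- Any two distinct `a, b ∈ D(S)*` satisfy (i), (ii) or (iii); in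
particular `Γ̄(S)` is connected and `diam(Γ̄(S)) ≤ 3`. -/
theorem zdGraph_connected_and_diam_le_three (S : Type*) [SemigroupWithZero S] :
    (∀ a ∈ Dstar S, ∀ b ∈ Dstar S, a ≠ b →
      UEdge S a b ∨
      (∃ c ∈ Dstar S, UEdge S a c ∧ UEdge S c b) ∨
      (∃ c ∈ Dstar S, ∃ d ∈ Dstar S, UEdge S a c ∧ UEdge S c d ∧ UEdge S d b)) ∧
    (zdGraph S).Preconnected ∧
    (∀ a b : Dstar S, (zdGraph S).dist a b ≤ 3) := by
  refine ⟨fun a ha b hb hab => ?_, fun u v => ?_,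
    fun u v => ENat.toNat_le_toNat (zdGraph_edist_le_three u v) (by decide)⟩
  · rcases adj_or_exists_adj_of_edist_le_three (u := ⟨a, ha⟩) (v := ⟨b, hb⟩)
      (Subtype.coe_injective.ne_iff.mp hab) (zdGraph_edist_le_three _ _) with
      h | ⟨c, h₁, h₂⟩ | ⟨c, d, h₁, h₂, h₃⟩
    · exact .inl (zdGraph_adj_iff_uedge.mp h)
    · exact .inr (.inl ⟨c, c.2, zdGraph_adj_iff_uedge.mp h₁, zdGraph_adj_iff_uedge.mp h₂⟩)
    · exact .inr (.inr ⟨c, c.2, d, d.2, zdGraph_adj_iff_uedge.mp h₁,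
        zdGraph_adj_iff_uedge.mp h₂, zdGraph_adj_iff_uedge.mp h₃⟩)
  · exact reachable_of_edist_ne_top ((zdGraph_edist_le_three u v).trans_lt (by decide)).ne
end

section
/- Let S be a semigroup with zero. If the undirected zero-divisor graph Γ̄(S) contains a cycle, then the girth of Γ̄(S) is at most 4. -/
/-!
Suppose `Γ̄(S)` has a cycle but neither triangles nor squares. Going round the cycle gives an
infinite non-backtracking walk `v₀ v₁ v₂ …`. If some `b = vᵢ₊₁` is a sink (`vᵢ b = vᵢ₊₂ b = 0`),
square-freeness forces `b x ∈ {0, b}` for every `x`; then `b vᵢ₊₃ = b vᵢ₊₄ = b`, and since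
`vᵢ₊₃ vᵢ₊₄ = 0` or `vᵢ₊₄ vᵢ₊₃ = 0` we get `b = 0`. Without sinks the edges are all oriented the
same way, forwards (`vᵢ vᵢ₊₁ = 0`) after passing to `Sᵐᵒᵖ` if necessary. Triangle-freeness then
forces `vᵢ₊₁ vᵢ ∈ {vᵢ, vᵢ₊₁}`, and short associativity computations show that the choice `vᵢ₊₁`
is impossible whatever the choice at the next edge, while the choice `vᵢ` cannot occur at two
consecutive edges.
-/

namespace SimpleGraph

variable {V : Type*} {G : SimpleGraph V}

lemma girth_le_three {a b c : V} (hab : G.Adj a b) (hbc : G.Adj b c) (hca : G.Adj c a) :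
    G.girth ≤ 3 := by
  have hcyc : (Walk.cons hab (.cons hbc (.cons hca .nil))).IsCycle := by
    simp [Walk.cons_isCycle_iff, hab.ne, hab.ne.symm, hbc.ne, hca.ne, hca.ne.symm]
  exact G.girth_le_length hcyc

lemma girth_le_four {a b c d : V} (hab : G.Adj a b) (hbc : G.Adj b c) (hcd : G.Adj c d)
    (hda : G.Adj d a) (hac : a ≠ c) (hbd : b ≠ d) : G.girth ≤ 4 := by
  have hcyc : (Walk.cons hab (.cons hbc (.cons hcd (.cons hda .nil)))).IsCycle := by
    simp [Walk.cons_isCycle_iff, hab.ne, hab.ne.symm, hbc.ne, hcd.ne, hda.ne, hda.ne.symm, hac,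
      hac.symm, hbd]
  exact G.girth_le_length hcyc

namespace Walk

variable {u : V} {p : G.Walk u u}

lemma adj_getVert_mod (hp : 0 < p.length) (k : ℕ) :
    G.Adj (p.getVert (k % p.length)) (p.getVert ((k + 1) % p.length)) := by
  have hk := Nat.mod_lt k hp
  rw [← Nat.mod_add_mod]
  obtain h | h := (Nat.lt_iff_add_one_le.mp hk).eq_or_lt
  · rw [h, Nat.mod_self, getVert_zero]
    simpa [h] using p.adj_getVert_succ hk
  · rw [Nat.mod_eq_of_lt h]
    exact p.adj_getVert_succ hk

lemma IsCycle.getVert_mod_ne_add_two (hp : p.IsCycle) (k : ℕ) :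
    p.getVert (k % p.length) ≠ p.getVert ((k + 2) % p.length) := by
  have h3 := hp.three_le_length
  have hpos : 0 < p.length := by omega
  intro h
  have hmod : k ≡ k + 2 [MOD p.length] :=
    hp.getVert_injOn' (Nat.le_sub_one_of_lt (Nat.mod_lt _ hpos))
      (Nat.le_sub_one_of_lt (Nat.mod_lt _ hpos)) h
  have := Nat.le_of_dvd two_pos (by simpa using (Nat.modEq_iff_dvd' (by omega)).mp hmod)
  omega

end Walk

end SimpleGraph

namespace ZeroDivisorGraph

open MulOpposite

variable {S : Type*} [SemigroupWithZero S] {a b c d : S}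

/-- Adjacency of `Γ̄(S)` read on elements of `S`, so that products such as `b * x` can be
used as vertices without membership proofs in `Dstar S`. -/
def Adj (a b : S) : Prop := a ≠ 0 ∧ b ≠ 0 ∧ a ≠ b ∧ (a * b = 0 ∨ b * a = 0)

lemma Adj.symm (h : Adj a b) : Adj b a := ⟨h.2.1, h.1, h.2.2.1.symm, h.2.2.2.symm⟩

lemma adj_of_mul_eq_zero (ha : a ≠ 0) (hb : b ≠ 0) (hab : a ≠ b) (h : a * b = 0) : Adj a b :=
  ⟨ha, hb, hab, .inl h⟩

lemma Adj.mem_dstar (h : Adj a b) : a ∈ Dstar S := ⟨h.1, b, h.2.1, h.2.2.2⟩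

lemma zdGraph_adj_iff {x y : Dstar S} : (zdGraph S).Adj x y ↔ Adj (x : S) y :=
  ⟨fun h => ⟨x.2.1, y.2.1, Subtype.coe_injective.ne h.1, h.2⟩,
    fun h => ⟨Subtype.coe_injective.ne_iff.1 h.2.2.1, h.2.2.2⟩⟩

lemma Adj.zdGraph_adj (h : Adj a b) :
    (zdGraph S).Adj ⟨a, h.mem_dstar⟩ ⟨b, h.symm.mem_dstar⟩ :=
  zdGraph_adj_iff.2 h

lemma adj_op_iff : Adj (op a) (op b) ↔ Adj a b := by
  simp only [Adj, ← op_mul, op_eq_zero_iff, ne_eq, op_inj, or_comm]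

structure NoShortCycles (S : Type*) [SemigroupWithZero S] : Prop where
  not_triangle {a b c : S} : Adj a b → Adj b c → ¬ Adj c a
  not_square {a b c d : S} : Adj a b → Adj b c → Adj c d → a ≠ c → b ≠ d → ¬ Adj d a

lemma NoShortCycles.op (hS : NoShortCycles S) : NoShortCycles Sᵐᵒᵖ where
  not_triangle {a b c} hab hbc hca := by
    rw [← op_unop a, ← op_unop b, ← op_unop c, adj_op_iff] at *
    exact hS.not_triangle hab hbc hca
  not_square {a b c d} hab hbc hcd hac hbd hda := by
    rw [← op_unop a, ← op_unop b, ← op_unop c, ← op_unop d, adj_op_iff] at *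
    exact hS.not_square hab hbc hcd (unop_injective.ne hac) (unop_injective.ne hbd) hda

lemma noShortCycles_of_four_lt_girth (h : 4 < (zdGraph S).girth) : NoShortCycles S where
  not_triangle hab hbc hca := by
    have := SimpleGraph.girth_le_three hab.zdGraph_adj hbc.zdGraph_adj hca.zdGraph_adj
    omega
  not_square hab hbc hcd hac hbd hda := by
    have := SimpleGraph.girth_le_four hab.zdGraph_adj hbc.zdGraph_adj hcd.zdGraph_adj
      hda.zdGraph_adj (by simpa using hac) (by simpa using hbd)
    omega

/-- Otherwise `b * x` would close the square `a — b * x — c — b`. -/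
lemma NoShortCycles.mul_eq_zero_or_self (hS : NoShortCycles S) (hab : Adj a b) (hbc : Adj b c)
    (hac : a ≠ c) (h₁ : a * b = 0) (h₂ : c * b = 0) (x : S) : b * x = 0 ∨ b * x = b := by
  by_contra! hx
  obtain ⟨hy₀, hyb⟩ := hx
  have hay : a * (b * x) = 0 := by rw [← mul_assoc, h₁, zero_mul]
  have hcy : c * (b * x) = 0 := by rw [← mul_assoc, h₂, zero_mul]
  have hca : ¬ Adj c a := hS.not_triangle hab hbc
  have hya : b * x ≠ a := fun h => hca (adj_of_mul_eq_zero hbc.2.1 hab.1 hac.symm (h ▸ hcy))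
  have hyc : b * x ≠ c := fun h => hca (adj_of_mul_eq_zero hab.1 hbc.2.1 hac (h ▸ hay)).symm
  exact hS.not_square (adj_of_mul_eq_zero hab.1 hy₀ hya.symm hay)
    (adj_of_mul_eq_zero hbc.2.1 hy₀ hyc.symm hcy).symm hbc.symm hac hyb hab.symm

/-- The vertex `a * c` closes the square `a * c — b — c — d`. -/
lemma NoShortCycles.false_of_mul_eq_self (hS : NoShortCycles S) (hab : Adj a b) (hbc : Adj b c)
    (hcd : Adj c d) (hac : a ≠ c) (hbd : b ≠ d) (h₁ : a * b = 0) (h₂ : b * c = 0)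
    (h₃ : c * d = 0) (hba : b * a = b) (hcb : c * b = b) : False := by
  have hy₀ : a * c ≠ 0 := fun h =>
    hS.not_triangle hab hbc (adj_of_mul_eq_zero hab.1 hbc.2.1 hac h).symm
  have hyb : a * c * b = 0 := by rw [mul_assoc, hcb, h₁]
  have hyd : a * c * d = 0 := by rw [mul_assoc, h₃, mul_zero]
  have hya : a * c ≠ a := fun h => hab.2.1 <| by
    rw [← hba, ← h, ← mul_assoc, hba, h₂]
  have hyc : a * c ≠ c := fun h => hab.2.1 <| by
    rw [← hcb, ← h, mul_assoc, hcb, h₁]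
  have hdb : ¬ Adj d b := hS.not_triangle hbc hcd
  have hyb' : a * c ≠ b := fun h => hdb (adj_of_mul_eq_zero hbc.1 hcd.2.1 hbd (h ▸ hyd)).symm
  have hyd' : a * c ≠ d := fun h => hdb (adj_of_mul_eq_zero hcd.2.1 hbc.1 hbd.symm (h ▸ hyb))
  exact hS.not_square (adj_of_mul_eq_zero hy₀ hbc.1 hyb' hyb) hbc hcd hyc hbd
    (adj_of_mul_eq_zero hy₀ hcd.2.1 hyd' hyd).symm

structure IsNonBacktracking (v : ℕ → S) : Prop where
  adj (i : ℕ) : Adj (v i) (v (i + 1))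
  ne_add_two (i : ℕ) : v i ≠ v (i + 2)

namespace IsNonBacktracking

variable {v : ℕ → S}

lemma shift (hv : IsNonBacktracking v) (k : ℕ) : IsNonBacktracking (fun i => v (i + k)) where
  adj i := by simpa only [Nat.add_right_comm] using hv.adj (i + k)
  ne_add_two i := by simpa only [Nat.add_right_comm] using hv.ne_add_two (i + k)

lemma op (hv : IsNonBacktracking v) : IsNonBacktracking (fun i => op (v i)) where
  adj i := adj_op_iff.2 (hv.adj i)
  ne_add_two i := op_injective.ne (hv.ne_add_two i)

lemma ne_add_three (hS : NoShortCycles S) (hv : IsNonBacktracking v) (i : ℕ) :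
    v i ≠ v (i + 3) := fun h =>
  hS.not_triangle (hv.adj i) (hv.adj (i + 1)) (by rw [h]; exact hv.adj (i + 2))

lemma not_sink (hS : NoShortCycles S) (hv : IsNonBacktracking v) :
    ¬ (v 0 * v 1 = 0 ∧ v 2 * v 1 = 0) := by
  rintro ⟨h₁, h₂⟩
  have hb := hS.mul_eq_zero_or_self (hv.adj 0) (hv.adj 1) (hv.ne_add_two 0) h₁ h₂
  have hbd : v 1 * v 3 = v 1 := (hb (v 3)).resolve_left fun h => hS.not_triangle (hv.adj 1)
    (hv.adj 2) (adj_of_mul_eq_zero (hv.adj 1).1 (hv.adj 3).1 (hv.ne_add_two 1) h).symm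
  have hbe : v 1 * v 4 = v 1 := (hb (v 4)).resolve_left fun h => hS.not_square (hv.adj 1)
    (hv.adj 2) (hv.adj 3) (hv.ne_add_two 1) (hv.ne_add_two 2)
    (adj_of_mul_eq_zero (hv.adj 1).1 (hv.adj 4).1 (hv.ne_add_three hS 1) h).symm
  apply (hv.adj 1).1
  rcases (hv.adj 3).2.2.2 with h | h
  · rw [← hbe, ← hbd, mul_assoc, h, mul_zero]
  · rw [← hbd, ← hbe, mul_assoc, h, mul_zero]

lemma false_of_forward (hS : NoShortCycles S) (hv : IsNonBacktracking v)
    (hfwd : ∀ i, v i * v (i + 1) = 0) (hback : ∀ i, v (i + 1) * v i ≠ 0) : False := by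
  have hmem (i : ℕ) : v (i + 1) * v i = v i ∨ v (i + 1) * v i = v (i + 1) := by
    by_contra! h
    refine hS.not_triangle (hv.adj i)
      (adj_of_mul_eq_zero (hback i) (hv.adj i).2.1 h.2 ?_).symm
      (adj_of_mul_eq_zero (hv.adj i).1 (hback i) (Ne.symm h.1) ?_).symm
    · rw [mul_assoc, hfwd, mul_zero]
    · rw [← mul_assoc, hfwd, zero_mul]
  -- `H` / `L`: the choice `vᵢ₊₁ vᵢ = vᵢ₊₁` / `vᵢ₊₁ vᵢ = vᵢ` at the edge `i`
  have hHH {a b c : S} (h₁ : a * b = 0) (hba : b * a = b) (hcb : c * b = c) : c = 0 := by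
    have hca : c * a = c := by rw [← hcb, mul_assoc, hba]
    rw [← hcb, ← hca, mul_assoc, h₁, mul_zero]
  have hLL {a b c : S} (h₂ : b * c = 0) (hba : b * a = a) (hcb : c * b = b) : a = 0 := by
    have hca : c * a = a := by rw [← hba, ← mul_assoc, hcb]
    rw [← hba, ← hca, ← mul_assoc, h₂, zero_mul]
  have hL (i : ℕ) : v (i + 1) * v i = v i := by
    refine (hmem i).resolve_right fun hH => (hmem (i + 1)).elim (fun hL => ?_) (fun hH' => ?_)
    · exact hS.false_of_mul_eq_self (hv.adj i) (hv.adj (i + 1)) (hv.adj (i + 2))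
        (hv.ne_add_two i) (hv.ne_add_two (i + 1)) (hfwd i) (hfwd (i + 1)) (hfwd (i + 2)) hH hL
    · exact (hv.adj (i + 2)).1 (hHH (hfwd i) hH hH')
  exact (hv.adj 0).1 (hLL (hfwd 1) (hL 0) (hL 1))

lemma false_of_mul_eq_zero (hS : NoShortCycles S) (hv : IsNonBacktracking v)
    (h₀ : v 0 * v 1 = 0) : False := by
  have hsink (i : ℕ) : ¬ (v i * v (i + 1) = 0 ∧ v (i + 2) * v (i + 1) = 0) := by
    simpa only [zero_add, Nat.add_comm] using (hv.shift i).not_sink hS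
  have hfwd (i : ℕ) : v i * v (i + 1) = 0 := by
    induction i with
    | zero => exact h₀
    | succ i ih => exact (hv.adj (i + 1)).2.2.2.resolve_right fun h => hsink i ⟨ih, h⟩
  exact (hv.shift 1).false_of_forward hS (fun i => hfwd (i + 1)) fun i h => hsink i ⟨hfwd i, h⟩

end IsNonBacktracking

lemma NoShortCycles.not_isNonBacktracking (hS : NoShortCycles S) {v : ℕ → S} :
    ¬ IsNonBacktracking v := fun hv => by
  rcases (hv.adj 0).2.2.2 with h | h
  · exact hv.false_of_mul_eq_zero hS h
  · exact hv.op.false_of_mul_eq_zero hS.op (by rw [← op_mul, h, op_zero])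

lemma isNonBacktracking_of_isCycle {u : Dstar S} {w : (zdGraph S).Walk u u} (hw : w.IsCycle) :
    IsNonBacktracking fun k => (w.getVert (k % w.length) : S) where
  adj k := zdGraph_adj_iff.1 (w.adj_getVert_mod (by have := hw.three_le_length; omega) k)
  ne_add_two k := Subtype.coe_injective.ne (hw.getVert_mod_ne_add_two k)

end ZeroDivisorGraph

/-- If `Γ̄(S)` contains a cycle, then its girth is at most `4`. -/
theorem zdGraph_girth_le_four (S : Type*) [SemigroupWithZero S]
    (h : ¬ (zdGraph S).IsAcyclic) :
    (zdGraph S).girth ≤ 4 := by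
  by_contra! hgirth
  obtain ⟨u, w, hw⟩ : ∃ u, ∃ w : (zdGraph S).Walk u u, w.IsCycle := by
    simpa [SimpleGraph.IsAcyclic] using h
  exact (ZeroDivisorGraph.noShortCycles_of_four_lt_girth hgirth).not_isNonBacktracking
    (ZeroDivisorGraph.isNonBacktracking_of_isCycle hw)
end
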